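/- arXiv:1704.03641 — 8 statements merged into one kernel-verified Lean document; each statement's English description precedes it below -/
import Mathlib

section
/- Under the equilibrium of a system (m,n,μ), the elasticities of the equilibrium throughput λ(m,n,μ) = m·n·ρ(φ(m,n,μ)) with respect to m and with respect to n are equal, and both equal ε^λ = (1 + (m·n·|dρ/dφ|)/(∂Λ/∂φ))⁻¹, which lies in the interval (0,1]. -/
/-!
Differentiating the equilibrium identity `Λ(φ) = g·ρ(φ)`, with `g = m·n` viewed as a function of
one of the two factors, gives `Λ'·φ' = g'·ρ + g·ρ'·φ'`, so the throughput derivative `Λ'·φ'` equals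
`Λ'·g'·ρ / (Λ' − g·ρ')`. Since `g` is linear in each factor, `x·g' = g`, and both elasticities
reduce to `Λ' / (Λ' + m·n·|ρ'|)`.
-/

section ImplicitDifferentiation

variable {Λ ρ f g : ℝ → ℝ} {x Λ' ρ' f' g' lam : ℝ}

theorem hasDerivAt_throughput_eq_div (heq : ∀ y, Λ (f y) = g y * ρ (f y))
    (hΛ : HasDerivAt Λ Λ' (f x)) (hρ : HasDerivAt ρ ρ' (f x)) (hf : HasDerivAt f f' x)
    (hg : HasDerivAt g g' x) (hlam : HasDerivAt (fun y => g y * ρ (f y)) lam x)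
    (hD : Λ' - g x * ρ' ≠ 0) :
    lam = Λ' * g' * ρ (f x) / (Λ' - g x * ρ') := by
  have hchain : lam = Λ' * f' := hlam.unique (funext heq ▸ hΛ.comp x hf)
  have hproduct : lam = g' * ρ (f x) + g x * (ρ' * f') := hlam.unique (hg.mul (hρ.comp x hf))
  rw [eq_div_iff hD]
  linear_combination Λ' * hproduct - g x * ρ' * hchain

theorem elasticity_throughput_eq_div (heq : ∀ y, Λ (f y) = g y * ρ (f y))
    (hΛ : HasDerivAt Λ Λ' (f x)) (hρ : HasDerivAt ρ ρ' (f x)) (hf : HasDerivAt f f' x)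
    (hg : HasDerivAt g g' x) (hlam : HasDerivAt (fun y => g y * ρ (f y)) lam x)
    (hD : Λ' - g x * ρ' ≠ 0) (hgx : g x ≠ 0) (hr : ρ (f x) ≠ 0)
    (hlinear : x * g' = g x) :
    x / (g x * ρ (f x)) * lam = Λ' / (Λ' - g x * ρ') := by
  rw [hasDerivAt_throughput_eq_div heq hΛ hρ hf hg hlam hD]
  field_simp
  linear_combination Λ' * hlinear

end ImplicitDifferentiation

theorem inv_one_add_div_eq_div_add {a s : ℝ} (ha : a ≠ 0) : (1 + s / a)⁻¹ = a / (a + s) := by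
  rw [one_add_div ha, inv_div]

theorem div_add_mem_Ioc {a s : ℝ} (ha : 0 < a) (hs : 0 ≤ s) : a / (a + s) ∈ Set.Ioc 0 1 :=
  ⟨by positivity, (div_le_one (by positivity)).2 (le_add_of_nonneg_right hs)⟩

/-- At equilibrium, the elasticities of throughput `λ = m·n·ρ(φ(m,n))` with
respect to `m` and `n` coincide and equal `(1 + m·n·|dρ/dφ|/(∂Λ/∂φ))⁻¹ ∈ (0,1]`. -/
theorem elasticity_of_throughput
    (Λ ρ : ℝ → ℝ) (φ : ℝ → ℝ → ℝ) (m n Λ' ρ' dφm dφn lamM lamN : ℝ)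
    (hm : 0 < m) (hn : 0 < n)
    (hρpos : 0 < ρ (φ m n))
    (heq : ∀ a b, Λ (φ a b) = a * b * ρ (φ a b))
    (hΛ : HasDerivAt Λ Λ' (φ m n))
    (hρ : HasDerivAt ρ ρ' (φ m n))
    (hΛ' : 0 < Λ') (hρ' : ρ' < 0)
    (hφm : HasDerivAt (fun a => φ a n) dφm m)
    (hφn : HasDerivAt (fun b => φ m b) dφn n)
    (hlamM : HasDerivAt (fun a => a * n * ρ (φ a n)) lamM m)
    (hlamN : HasDerivAt (fun b => m * b * ρ (φ m b)) lamN n) :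
    |m / (m * n * ρ (φ m n)) * lamM| = |n / (m * n * ρ (φ m n)) * lamN| ∧
    |m / (m * n * ρ (φ m n)) * lamM| = (1 + m * n * |ρ'| / Λ')⁻¹ ∧
    0 < (1 + m * n * |ρ'| / Λ')⁻¹ ∧ (1 + m * n * |ρ'| / Λ')⁻¹ ≤ 1 := by
  have hmn : 0 < m * n := mul_pos hm hn
  have hD : Λ' - m * n * ρ' = Λ' + m * n * |ρ'| := by rw [abs_of_neg hρ']; ring
  have hDpos : Λ' - m * n * ρ' ≠ 0 := by rw [hD]; positivity
  have hEm : m / (m * n * ρ (φ m n)) * lamM = Λ' / (Λ' - m * n * ρ') :=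
    elasticity_throughput_eq_div (fun a => heq a n) hΛ hρ hφm (hasDerivAt_mul_const n) hlamM
      hDpos hmn.ne' hρpos.ne' rfl
  have hEn : n / (m * n * ρ (φ m n)) * lamN = Λ' / (Λ' - m * n * ρ') :=
    elasticity_throughput_eq_div (g := fun b => m * b) (fun b => heq m b) hΛ hρ hφn
      (hasDerivAt_const_mul m) hlamN hDpos hmn.ne' hρpos.ne' (mul_comm n m)
  obtain ⟨hpos, hle⟩ := div_add_mem_Ioc hΛ' (by positivity : 0 ≤ m * n * |ρ'|)
  rw [hEm, hEn, inv_one_add_div_eq_div_add hΛ'.ne', hD, abs_of_pos hpos]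
  exact ⟨rfl, rfl, hpos, hle⟩
end

section
/- Let the user-side demand be m(p) with hazard rate m̃^p = −m'(p)/m(p) > 0, and the CP-side demand n(q) with hazard rate ñ^q = −n'(q)/n(q) > 0. Then at the congestion equilibrium with fixed capacity, ∂φ/∂p = −(∂g/∂φ)⁻¹·λ·m̃^p < 0 and ∂λ/∂p = (∂Λ/∂φ)·(∂φ/∂p) < 0, i.e., raising the user-side price strictly decreases both equilibrium congestion and equilibrium throughput. -/
/-!
Differentiating the equilibrium identity `Λ(φ(p)) = a(p) ρ(φ(p))`, with `a = m · n`, gives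
`Λ' φ' = a' ρ + a ρ' φ'`, so `φ' = a' ρ / (Λ' - a ρ')`. The denominator is `∂g/∂φ > 0` because
`ρ` decreases, and the numerator is negative because demand decreases; throughput
`λ = Λ ∘ φ` then moves with `φ`.
-/

section ImplicitCongestion

variable {Λ ρ a φ : ℝ → ℝ} {p a' Λ' ρ' dφ : ℝ}

theorem throughput_deriv_eq (heq : ∀ x, Λ (φ x) = a x * ρ (φ x))
    (hΛ : HasDerivAt Λ Λ' (φ p)) (hφ : HasDerivAt φ dφ p) {dlam : ℝ}
    (hlam : HasDerivAt (fun x => a x * ρ (φ x)) dlam p) :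
    dlam = Λ' * dφ :=
  hlam.unique (funext heq ▸ hΛ.comp p hφ)

theorem implicit_deriv_eq (heq : ∀ x, Λ (φ x) = a x * ρ (φ x)) (ha : HasDerivAt a a' p)
    (hΛ : HasDerivAt Λ Λ' (φ p)) (hρ : HasDerivAt ρ ρ' (φ p)) (hφ : HasDerivAt φ dφ p) :
    Λ' * dφ = a' * ρ (φ p) + a p * (ρ' * dφ) :=
  (throughput_deriv_eq heq hΛ hφ (ha.mul (hρ.comp p hφ))).symm

theorem implicit_deriv_eq_div (heq : ∀ x, Λ (φ x) = a x * ρ (φ x)) (ha : HasDerivAt a a' p)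
    (hΛ : HasDerivAt Λ Λ' (φ p)) (hρ : HasDerivAt ρ ρ' (φ p)) (hφ : HasDerivAt φ dφ p)
    (hg : Λ' - a p * ρ' ≠ 0) :
    dφ = a' * ρ (φ p) / (Λ' - a p * ρ') := by
  rw [eq_div_iff hg]
  linarith [implicit_deriv_eq heq ha hΛ hρ hφ]

theorem implicit_deriv_neg (heq : ∀ x, Λ (φ x) = a x * ρ (φ x)) (ha : HasDerivAt a a' p)
    (hΛ : HasDerivAt Λ Λ' (φ p)) (hρ : HasDerivAt ρ ρ' (φ p)) (hφ : HasDerivAt φ dφ p)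
    (ha_nonneg : 0 ≤ a p) (ha' : a' < 0) (hρ_pos : 0 < ρ (φ p)) (hΛ' : 0 < Λ')
    (hρ' : ρ' < 0) :
    dφ < 0 := by
  have hg : 0 < Λ' - a p * ρ' := by nlinarith
  rw [implicit_deriv_eq_div heq ha hΛ hρ hφ hg.ne']
  exact div_neg_of_neg_of_pos (mul_neg_of_neg_of_pos ha' hρ_pos) hg

end ImplicitCongestion

/-- Raising the user-side price strictly decreases both equilibrium congestion
and equilibrium throughput:
`∂φ/∂p = −(∂g/∂φ)⁻¹·λ·m̃ᵖ < 0` and `∂λ/∂p = (∂Λ/∂φ)·(∂φ/∂p) < 0`. -/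
theorem price_decreases_congestion_and_throughput
    (Λ ρ mdem φeq : ℝ → ℝ) (nq p m' Λ' ρ' dφp lamP : ℝ)
    (hmpos : 0 < mdem p) (hnq : 0 < nq) (hρpos : 0 < ρ (φeq p))
    (hm : HasDerivAt mdem m' p) (hm' : m' < 0)
    (heq : ∀ x, Λ (φeq x) = mdem x * nq * ρ (φeq x))
    (hΛ : HasDerivAt Λ Λ' (φeq p))
    (hρ : HasDerivAt ρ ρ' (φeq p))
    (hΛ' : 0 < Λ') (hρ'neg : ρ' < 0)
    (hφ : HasDerivAt φeq dφp p)
    (hlamP : HasDerivAt (fun x => mdem x * nq * ρ (φeq x)) lamP p) :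
    dφp = -(Λ' - mdem p * nq * ρ')⁻¹ * (mdem p * nq * ρ (φeq p)) * (-m' / mdem p) ∧
    dφp < 0 ∧ lamP = Λ' * dφp ∧ lamP < 0 := by
  have ha : HasDerivAt (fun x => mdem x * nq) (m' * nq) p := hm.mul_const nq
  have hg : 0 < Λ' - mdem p * nq * ρ' := by nlinarith [mul_pos hmpos hnq]
  have hdφ_neg : dφp < 0 :=
    implicit_deriv_neg heq ha hΛ hρ hφ (by positivity)
      (mul_neg_of_neg_of_pos hm' hnq) hρpos hΛ' hρ'neg
  have hlam : lamP = Λ' * dφp := throughput_deriv_eq heq hΛ hφ hlamP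
  refine ⟨?_, hdφ_neg, hlam, hlam ▸ mul_neg_of_pos_of_neg hΛ' hdφ_neg⟩
  rw [implicit_deriv_eq_div heq ha hΛ hρ hφ hg.ne']
  field_simp
end

section
/- At the congestion equilibrium with fixed capacity, the ratio of price elasticities of throughput equals the ratio of price elasticities of demand: ε_p^λ : ε_q^λ = ε_p^m : ε_q^n, where ε_p^λ = |(p/λ)(∂λ/∂p)|, ε_q^λ = |(q/λ)(∂λ/∂q)|, ε_p^m = |(p/m)·m'(p)|, ε_q^n = |(q/n)·n'(q)|. -/
/-!
Differentiating the equilibrium identity `Λ(φ) = m n ρ(φ)` implicitly in `p` gives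
`φ_p (Λ' - m n ρ') = m' n ρ`, and since throughput is also `λ = Λ ∘ φ`, `λ_p = Λ' φ_p`;
likewise in `q`. As `Λ' > 0 > ρ'`, the factor `Λ' - m n ρ'` is positive, so
`λ_p : λ_q = m' n : m n'`, which is the claim after scaling by `p / λ` and `q / λ`.
-/

section Equilibrium

variable {Λ ρ g f : ℝ → ℝ} {a Λ' ρ' g' f' : ℝ}

theorem hasDerivAt_throughput_of_equilibrium (heq : ∀ x, Λ (f x) = g x * ρ (f x))
    (hΛ : HasDerivAt Λ Λ' (f a)) (hf : HasDerivAt f f' a) :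
    HasDerivAt (fun x => g x * ρ (f x)) (Λ' * f') a := by
  rw [show (fun x => g x * ρ (f x)) = Λ ∘ f from funext fun x => (heq x).symm]
  exact hΛ.comp a hf

theorem equilibrium_deriv_mul_sub (heq : ∀ x, Λ (f x) = g x * ρ (f x))
    (hΛ : HasDerivAt Λ Λ' (f a)) (hρ : HasDerivAt ρ ρ' (f a))
    (hg : HasDerivAt g g' a) (hf : HasDerivAt f f' a) :
    f' * (Λ' - g a * ρ') = g' * ρ (f a) := by
  have hprod : HasDerivAt (fun x => g x * ρ (f x)) (g' * ρ (f a) + g a * (ρ' * f')) a :=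
    hg.mul (hρ.comp a hf)
  have := (hasDerivAt_throughput_of_equilibrium heq hΛ hf).unique hprod
  linear_combination this

theorem throughput_deriv_mul_sub {lam : ℝ} (heq : ∀ x, Λ (f x) = g x * ρ (f x))
    (hΛ : HasDerivAt Λ Λ' (f a)) (hρ : HasDerivAt ρ ρ' (f a))
    (hg : HasDerivAt g g' a) (hf : HasDerivAt f f' a)
    (hlam : HasDerivAt (fun x => g x * ρ (f x)) lam a) :
    lam * (Λ' - g a * ρ') = Λ' * g' * ρ (f a) := by
  rw [hlam.unique (hasDerivAt_throughput_of_equilibrium heq hΛ hf), mul_assoc,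
    equilibrium_deriv_mul_sub heq hΛ hρ hg hf, mul_assoc]

end Equilibrium

theorem abs_elasticity_mul_eq_of_cross {M N R D Λ' m' n' lamP lamQ p q : ℝ}
    (hM : M ≠ 0) (hN : N ≠ 0) (hD : D ≠ 0)
    (hP : lamP * D = Λ' * (m' * N) * R) (hQ : lamQ * D = Λ' * (M * n') * R) :
    |p / (M * N * R) * lamP| * |q / N * n'| = |q / (M * N * R) * lamQ| * |p / M * m'| := by
  have cross : lamP * n' / N = lamQ * m' / M := by
    rw [div_eq_div_iff hN hM]
    exact mul_right_cancel₀ hD (by linear_combination n' * M * hP - m' * N * hQ)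
  rw [← abs_mul, ← abs_mul]
  congr 1
  calc p / (M * N * R) * lamP * (q / N * n') = p * q / (M * N * R) * (lamP * n' / N) := by ring
    _ = p * q / (M * N * R) * (lamQ * m' / M) := by rw [cross]
    _ = q / (M * N * R) * lamQ * (p / M * m') := by ring

theorem elasticity_ratio_prices_general
    (Λ ρ mdem ndem : ℝ → ℝ) (φ : ℝ → ℝ → ℝ)
    (p q m' n' Λ' ρ' dφp dφq lamP lamQ : ℝ)
    (hmpos : 0 < mdem p) (hnpos : 0 < ndem q)
    (hm : HasDerivAt mdem m' p)
    (hn : HasDerivAt ndem n' q)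
    (heq : ∀ x y, Λ (φ x y) = mdem x * ndem y * ρ (φ x y))
    (hΛ : HasDerivAt Λ Λ' (φ p q))
    (hρ : HasDerivAt ρ ρ' (φ p q))
    (hΛ' : 0 < Λ') (hρ'neg : ρ' < 0)
    (hφp : HasDerivAt (fun x => φ x q) dφp p)
    (hφq : HasDerivAt (fun y => φ p y) dφq q)
    (hlamP : HasDerivAt (fun x => mdem x * ndem q * ρ (φ x q)) lamP p)
    (hlamQ : HasDerivAt (fun y => mdem p * ndem y * ρ (φ p y)) lamQ q) :
    |p / (mdem p * ndem q * ρ (φ p q)) * lamP| * |q / ndem q * n'| =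
    |q / (mdem p * ndem q * ρ (φ p q)) * lamQ| * |p / mdem p * m'| := by
  have hD : 0 < Λ' - mdem p * ndem q * ρ' := by
    linarith [mul_neg_of_pos_of_neg (mul_pos hmpos hnpos) hρ'neg]
  have hP := throughput_deriv_mul_sub (g := fun x => mdem x * ndem q) (heq · q) hΛ hρ
    (hm.mul_const _) hφp hlamP
  have hQ := throughput_deriv_mul_sub (g := fun y => mdem p * ndem y) (heq p ·) hΛ hρ
    (hn.const_mul _) hφq hlamQ
  exact abs_elasticity_mul_eq_of_cross hmpos.ne' hnpos.ne' hD.ne' hP hQ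

/-- At equilibrium, the price elasticities of throughput are in the same ratio as
the price elasticities of demand: `ε_p^λ : ε_q^λ = ε_p^m : ε_q^n`
(stated in cross-multiplied form). -/
theorem elasticity_ratio_prices
    (Λ ρ mdem ndem : ℝ → ℝ) (φ : ℝ → ℝ → ℝ)
    (p q m' n' Λ' ρ' dφp dφq lamP lamQ : ℝ)
    (hp : 0 < p) (hq : 0 < q)
    (hmpos : 0 < mdem p) (hnpos : 0 < ndem q) (hρpos : 0 < ρ (φ p q))
    (hm : HasDerivAt mdem m' p) (hm' : m' < 0)
    (hn : HasDerivAt ndem n' q) (hn' : n' < 0)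
    (heq : ∀ x y, Λ (φ x y) = mdem x * ndem y * ρ (φ x y))
    (hΛ : HasDerivAt Λ Λ' (φ p q))
    (hρ : HasDerivAt ρ ρ' (φ p q))
    (hΛ' : 0 < Λ') (hρ'neg : ρ' < 0)
    (hφp : HasDerivAt (fun x => φ x q) dφp p)
    (hφq : HasDerivAt (fun y => φ p y) dφq q)
    (hlamP : HasDerivAt (fun x => mdem x * ndem q * ρ (φ x q)) lamP p)
    (hlamQ : HasDerivAt (fun y => mdem p * ndem y * ρ (φ p y)) lamQ q) :
    |p / (mdem p * ndem q * ρ (φ p q)) * lamP| * |q / ndem q * n'| =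
    |q / (mdem p * ndem q * ρ (φ p q)) * lamQ| * |p / mdem p * m'| :=
  elasticity_ratio_prices_general Λ ρ mdem ndem φ p q m' n' Λ' ρ' dφp dφq lamP lamQ hmpos hnpos hm
    hn heq hΛ hρ hΛ' hρ'neg hφp hφq hlamP hlamQ
end

section
/- At equilibrium, the partial derivatives of profit with respect to the two prices are ∂U/∂p = λ − (p+q−c)·ε^λ·λ·m̃^p and ∂U/∂q = λ − (p+q−c)·ε^λ·λ·ñ^q, where m̃^p = −m'(p)/m(p), ñ^q = −n'(q)/n(q), and ε^λ is the elasticity of equilibrium throughput. -/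
/-!
Differentiating the equilibrium condition `Λ(φ) = a·ρ(φ)` along a price gives
`Λ' φ' = a' ρ + a ρ' φ'`, so `φ' = a' ρ / (Λ' − a ρ')` and the throughput `λ = a ρ(φ)` moves by
`Λ' φ' = ε^λ · λ · a'/a` with `ε^λ = Λ'/(Λ' − a ρ') = (1 + a|ρ'|/Λ')⁻¹` (as `ρ' < 0`).
The product rule for `(p + q − c)·λ` then gives both partials, with `a = m(p) n(q)`.
-/

theorem inv_one_add_mul_abs_div_of_neg {s ρ' Λ' : ℝ} (hΛ' : Λ' ≠ 0) (hρ' : ρ' < 0) :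
    (1 + s * |ρ'| / Λ')⁻¹ = Λ' / (Λ' - s * ρ') := by
  rw [abs_of_neg hρ', add_div' _ _ _ hΛ', inv_div]
  ring

section Equilibrium

variable {Λ ρ φ a : ℝ → ℝ} {x Λ' ρ' φ' a' : ℝ}

theorem hasDerivAt_throughput_of_equilibrium_s7 (heq : ∀ y, Λ (φ y) = a y * ρ (φ y))
    (hΛ : HasDerivAt Λ Λ' (φ x)) (hρ : HasDerivAt ρ ρ' (φ x)) (hφ : HasDerivAt φ φ' x)
    (ha : HasDerivAt a a' x) (hK : Λ' - a x * ρ' ≠ 0) :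
    HasDerivAt (fun y => a y * ρ (φ y)) (Λ' / (Λ' - a x * ρ') * a' * ρ (φ x)) x := by
  have hviaΛ : HasDerivAt (fun y => a y * ρ (φ y)) (Λ' * φ') x := by
    simpa only [Function.comp_def, heq] using hΛ.comp x hφ
  have hviaρ : HasDerivAt (fun y => a y * ρ (φ y)) (a' * ρ (φ x) + a x * (ρ' * φ')) x :=
    ha.mul (hρ.comp x hφ)
  have hφ' : φ' = a' * ρ (φ x) / (Λ' - a x * ρ') := by
    rw [eq_div_iff hK]
    linarith [hviaΛ.unique hviaρ]
  convert hviaΛ using 1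
  rw [hφ']
  ring

theorem profit_deriv_eq_of_equilibrium {μ : ℝ → ℝ} {U' : ℝ}
    (heq : ∀ y, Λ (φ y) = a y * ρ (φ y))
    (hΛ : HasDerivAt Λ Λ' (φ x)) (hρ : HasDerivAt ρ ρ' (φ x)) (hφ : HasDerivAt φ φ' x)
    (ha : HasDerivAt a a' x) (hμ : HasDerivAt μ 1 x)
    (hU : HasDerivAt (fun y => μ y * (a y * ρ (φ y))) U' x)
    (hapos : 0 < a x) (hΛ' : 0 < Λ') (hρ' : ρ' < 0) :
    U' = a x * ρ (φ x) -
      μ x * (1 + a x * |ρ'| / Λ')⁻¹ * (a x * ρ (φ x)) * (-a' / a x) := by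
  have hK : 0 < Λ' - a x * ρ' := by nlinarith
  have hthroughput := hasDerivAt_throughput_of_equilibrium_s7 heq hΛ hρ hφ ha hK.ne'
  rw [hU.unique (hμ.mul hthroughput), inv_one_add_mul_abs_div_of_neg hΛ'.ne' hρ']
  field_simp
  ring

end Equilibrium

theorem profit_partials_in_prices_general
    (Λ ρ mdem ndem : ℝ → ℝ) (φ : ℝ → ℝ → ℝ)
    (p q c m' n' Λ' ρ' dφp dφq Up Uq : ℝ)
    (hmpos : 0 < mdem p) (hnpos : 0 < ndem q)
    (hm : HasDerivAt mdem m' p)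
    (hn : HasDerivAt ndem n' q)
    (heq : ∀ x y, Λ (φ x y) = mdem x * ndem y * ρ (φ x y))
    (hΛ : HasDerivAt Λ Λ' (φ p q))
    (hρ : HasDerivAt ρ ρ' (φ p q))
    (hΛ' : 0 < Λ') (hρ'neg : ρ' < 0)
    (hφp : HasDerivAt (fun x => φ x q) dφp p)
    (hφq : HasDerivAt (fun y => φ p y) dφq q)
    (hUp : HasDerivAt (fun x => (x + q - c) * (mdem x * ndem q * ρ (φ x q))) Up p)
    (hUq : HasDerivAt (fun y => (p + y - c) * (mdem p * ndem y * ρ (φ p y))) Uq q) :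
    Up = mdem p * ndem q * ρ (φ p q) -
        (p + q - c) * (1 + mdem p * ndem q * |ρ'| / Λ')⁻¹ *
          (mdem p * ndem q * ρ (φ p q)) * (-m' / mdem p) ∧
    Uq = mdem p * ndem q * ρ (φ p q) -
        (p + q - c) * (1 + mdem p * ndem q * |ρ'| / Λ')⁻¹ *
          (mdem p * ndem q * ρ (φ p q)) * (-n' / ndem q) := by
  have hmn := mul_pos hmpos hnpos
  constructor
  · have h := profit_deriv_eq_of_equilibrium (heq · q) hΛ hρ hφp (hm.mul_const (ndem q))
      (((hasDerivAt_id' p).add_const q).sub_const c) hUp hmn hΛ' hρ'neg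
    rwa [← neg_mul, mul_div_mul_right _ _ hnpos.ne'] at h
  · have h := profit_deriv_eq_of_equilibrium (heq p) hΛ hρ hφq (hn.const_mul (mdem p))
      (((hasDerivAt_id' q).const_add p).sub_const c) hUq hmn hΛ' hρ'neg
    rwa [← mul_neg, mul_div_mul_left _ _ hmpos.ne'] at h

/-- Partial derivatives of profit in the two prices:
`∂U/∂p = λ − (p+q−c)·ε^λ·λ·m̃ᵖ` and `∂U/∂q = λ − (p+q−c)·ε^λ·λ·ñ^q`. -/
theorem profit_partials_in_prices
    (Λ ρ mdem ndem : ℝ → ℝ) (φ : ℝ → ℝ → ℝ)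
    (p q c m' n' Λ' ρ' dφp dφq Up Uq : ℝ)
    (hmpos : 0 < mdem p) (hnpos : 0 < ndem q) (hρpos : 0 < ρ (φ p q))
    (hm : HasDerivAt mdem m' p) (hm' : m' < 0)
    (hn : HasDerivAt ndem n' q) (hn' : n' < 0)
    (heq : ∀ x y, Λ (φ x y) = mdem x * ndem y * ρ (φ x y))
    (hΛ : HasDerivAt Λ Λ' (φ p q))
    (hρ : HasDerivAt ρ ρ' (φ p q))
    (hΛ' : 0 < Λ') (hρ'neg : ρ' < 0)
    (hφp : HasDerivAt (fun x => φ x q) dφp p)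
    (hφq : HasDerivAt (fun y => φ p y) dφq q)
    (hUp : HasDerivAt (fun x => (x + q - c) * (mdem x * ndem q * ρ (φ x q))) Up p)
    (hUq : HasDerivAt (fun y => (p + y - c) * (mdem p * ndem y * ρ (φ p y))) Uq q) :
    Up = mdem p * ndem q * ρ (φ p q) -
        (p + q - c) * (1 + mdem p * ndem q * |ρ'| / Λ')⁻¹ *
          (mdem p * ndem q * ρ (φ p q)) * (-m' / mdem p) ∧
    Uq = mdem p * ndem q * ρ (φ p q) -
        (p + q - c) * (1 + mdem p * ndem q * |ρ'| / Λ')⁻¹ *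
          (mdem p * ndem q * ρ (φ p q)) * (-n' / ndem q) :=
  profit_partials_in_prices_general Λ ρ mdem ndem φ p q c m' n' Λ' ρ' dφp dφq Up Uq hmpos hnpos hm
    hn heq hΛ hρ hΛ' hρ'neg hφp hφq hUp hUq
end

section
/- Social welfare W(p,q,μ) = (s_m(p) + s_n(q))·λ(p,q,μ) evaluated at equilibrium satisfies ∂W/∂p = −λ − m̃^p·[W_n − W(1−ε^λ)] and ∂W/∂q = −λ − ñ^q·[W_m − W(1−ε^λ)], where W_m = s_m·λ, W_n = s_n·λ. -/
/-! Along either price, welfare is `(s + c)·λ` with `c` the other side's per-unit welfare held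
fixed. The hazard-rate identity `s' = s·h − 1` (from `S' = −m`) and `λ' = −λ·ε·h` give
`((s + c)·λ)' = −λ + h·s·λ − h·(s + c)·λ·ε`, which is the stated formula. -/

theorem hasDerivAt_welfare_of_hazard {s l : ℝ → ℝ} {c ε h x : ℝ}
    (hs : HasDerivAt s (s x * h - 1) x) (hl : HasDerivAt l (-(l x) * ε * h) x) :
    HasDerivAt (fun y => (s y + c) * l y)
      (-(l x) - h * (c * l x - (s x + c) * l x * (1 - ε))) x := by
  have h' : HasDerivAt (fun y => (s y + c) * l y)
      ((s x * h - 1) * l x + (s x + c) * (-(l x) * ε * h)) x :=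
    (hs.add_const c).mul hl
  exact h'.congr_deriv (by ring)

/-- Partial derivatives of social welfare `W = (s_m + s_n)·λ`:
`∂W/∂p = −λ − m̃ᵖ·[W_n − W(1−ε^λ)]` and `∂W/∂q = −λ − ñ^q·[W_m − W(1−ε^λ)]`. -/
theorem welfare_partials
    (sm sn : ℝ → ℝ) (lam : ℝ → ℝ → ℝ) (p q epsL mt nt : ℝ)
    (hsm : HasDerivAt sm (sm p * mt - 1) p)
    (hsn : HasDerivAt sn (sn q * nt - 1) q)
    (hlp : HasDerivAt (fun x => lam x q) (-(lam p q) * epsL * mt) p)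
    (hlq : HasDerivAt (fun y => lam p y) (-(lam p q) * epsL * nt) q) :
    HasDerivAt (fun x => (sm x + sn q) * lam x q)
      (-(lam p q) - mt * (sn q * lam p q - (sm p + sn q) * lam p q * (1 - epsL))) p ∧
    HasDerivAt (fun y => (sm p + sn y) * lam p y)
      (-(lam p q) - nt * (sm p * lam p q - (sm p + sn q) * lam p q * (1 - epsL))) q :=
  ⟨hasDerivAt_welfare_of_hazard hsm hlp, by
    simpa only [add_comm _ (sm p)] using hasDerivAt_welfare_of_hazard (c := sm p) hsn hlq⟩
end

section
/- If prices (p,q) maximize social welfare W(p,q,μ) = W_m + W_n subject to the zero-profit constraint p+q = c (interior maximum), then the demand hazard rates satisfy the proportionality m̃^p : ñ^q = (ε^λ − 1 + s_m/(s_m+s_n)) : (ε^λ − 1 + s_n/(s_m+s_n)). -/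
/-!
At an interior constrained optimum the derivative of welfare along the line `p + q = c`
vanishes, which equates the two hazard-weighted terms
`m̃ᵖ (W_n − W(1−ε^λ))` and `ñ^q (W_m − W(1−ε^λ))`. Each of these factors is
`λ (s_m + s_n)` times the corresponding entry of the claimed proportion, and
`λ (s_m + s_n) ≠ 0`, so the factor cancels.
-/

lemma share_mul_sub_eq {lam S e x : ℝ} (hS : S ≠ 0) :
    x * lam - S * lam * (1 - e) = lam * S * (e - 1 + x / S) := by
  field_simp
  ring

lemma hazard_ratio_of_first_order_condition {lam epsL mt nt sm sn : ℝ}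
    (hlam : lam ≠ 0) (hS : sm + sn ≠ 0)
    (hfoc : mt * (sn * lam - (sm + sn) * lam * (1 - epsL)) =
      nt * (sm * lam - (sm + sn) * lam * (1 - epsL))) :
    mt * (epsL - 1 + sn / (sm + sn)) = nt * (epsL - 1 + sm / (sm + sn)) := by
  rw [share_mul_sub_eq hS, share_mul_sub_eq hS, mul_left_comm, mul_left_comm nt] at hfoc
  exact mul_left_cancel₀ (mul_ne_zero hlam hS) hfoc

theorem welfare_optimal_hazard_ratio_general
    (Wc : ℝ → ℝ) (p lam epsL mt nt sm sn : ℝ)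
    (hlam : 0 < lam) (hsm : 0 < sm) (hsn : 0 < sn)
    (hW' : HasDerivAt Wc
      ((-lam - mt * (sn * lam - (sm + sn) * lam * (1 - epsL))) -
        (-lam - nt * (sm * lam - (sm + sn) * lam * (1 - epsL)))) p)
    (hmax : IsLocalMax Wc p) :
    mt * (epsL - 1 + sn / (sm + sn)) = nt * (epsL - 1 + sm / (sm + sn)) := by
  have hderiv_zero := hmax.hasDerivAt_eq_zero hW'
  exact hazard_ratio_of_first_order_condition hlam.ne' (add_pos hsm hsn).ne'
    (by linarith)

/-- At a welfare optimum subject to the zero-profit constraint `p+q=c`, the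
demand hazard rates satisfy
`m̃ᵖ : ñ^q = (ε^λ−1+s_m/(s_m+s_n)) : (ε^λ−1+s_n/(s_m+s_n))`. -/
theorem welfare_optimal_hazard_ratio
    (Wc : ℝ → ℝ) (p q c lam epsL mt nt sm sn : ℝ)
    (hlam : 0 < lam) (hsm : 0 < sm) (hsn : 0 < sn)
    (hpq : p + q = c)
    (hW' : HasDerivAt Wc
      ((-lam - mt * (sn * lam - (sm + sn) * lam * (1 - epsL))) -
        (-lam - nt * (sm * lam - (sm + sn) * lam * (1 - epsL)))) p)
    (hmax : IsLocalMax Wc p) :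
    mt * (epsL - 1 + sn / (sm + sn)) = nt * (epsL - 1 + sm / (sm + sn)) :=
  welfare_optimal_hazard_ratio_general Wc p lam epsL mt nt sm sn hlam hsm hsn hW' hmax
end

section
/- If the congestion function is Φ(λ,μ) = λ/μ (so Λ(φ,μ) = φμ), then the elasticity of equilibrium system throughput satisfies ε^λ = 1/(1 + ε_φ^ρ) ∈ (0,1], where ε_φ^ρ = |(φ/ρ)·(dρ/dφ)| is the congestion elasticity of the throughput gain, evaluated at the equilibrium congestion φ. -/
/-- The congestion elasticity `ε_φ^ρ = |(φ / ρ) ρ'|` of the throughput gain, evaluated at an equilibrium,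
is the term `m n |ρ'| / μ` of the throughput elasticity. -/
lemma abs_div_mul_eq_of_mul_eq {m n μ φ r d : ℝ} (hm : 0 < m) (hn : 0 < n) (hμ : 0 < μ)
    (hr : r ≠ 0) (heq : φ * μ = m * n * r) :
    |φ / r * d| = m * n * |d| / μ := by
  have hratio : φ / r = m * n / μ := (div_eq_div_iff hr hμ.ne').2 heq
  rw [hratio, abs_mul, abs_of_pos (by positivity)]
  ring

lemma inv_one_add_mem_Ioc {K : Type*} [Field K] [LinearOrder K] [IsStrictOrderedRing K] {x : K}
    (hx : 0 ≤ x) : (1 + x)⁻¹ ∈ Set.Ioc 0 1 :=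
  ⟨inv_pos.2 (by linarith), inv_le_one_of_one_le₀ (by linarith)⟩

theorem capacity_sharing_elasticity_general
    (ρ : ℝ → ℝ) (m n μ φ ρ' : ℝ)
    (hm : 0 < m) (hn : 0 < n) (hμ : 0 < μ)
    (hρpos : 0 < ρ φ)
    (heq : φ * μ = m * n * ρ φ) :
    (1 + m * n * |ρ'| / μ)⁻¹ = 1 / (1 + |φ / ρ φ * ρ'|) ∧
    0 < (1 + m * n * |ρ'| / μ)⁻¹ ∧ (1 + m * n * |ρ'| / μ)⁻¹ ≤ 1 := by
  have helasticity := abs_div_mul_eq_of_mul_eq (d := ρ') hm hn hμ hρpos.ne' heq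
  obtain ⟨hpos, hle⟩ := inv_one_add_mem_Ioc (by positivity : 0 ≤ m * n * |ρ'| / μ)
  exact ⟨by rw [helasticity, one_div], hpos, hle⟩

/-- For capacity sharing `Λ(φ,μ)=φμ` and equilibrium `φμ = m·n·ρ(φ)`,
the elasticity of throughput satisfies `ε^λ = 1/(1+ε_φ^ρ) ∈ (0,1]`
where `ε_φ^ρ = |(φ/ρ)·ρ'|`. -/
theorem capacity_sharing_elasticity
    (ρ : ℝ → ℝ) (m n μ φ ρ' : ℝ)
    (hm : 0 < m) (hn : 0 < n) (hμ : 0 < μ) (hφ : 0 < φ)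
    (hρpos : 0 < ρ φ)
    (hρ : HasDerivAt ρ ρ' φ) (hρ' : ρ' < 0)
    (heq : φ * μ = m * n * ρ φ) :
    (1 + m * n * |ρ'| / μ)⁻¹ = 1 / (1 + |φ / ρ φ * ρ'|) ∧
    0 < (1 + m * n * |ρ'| / μ)⁻¹ ∧ (1 + m * n * |ρ'| / μ)⁻¹ ≤ 1 :=
  capacity_sharing_elasticity_general ρ m n μ φ ρ' hm hn hμ hρpos heq
end

section
/- For the M/M/1 congestion function Φ(λ,μ) = 1/(μ−λ) with inverse Λ(φ,μ) = μ − 1/φ, the elasticity of equilibrium throughput is ε^λ(φ) = 1/(1 + m·n·G(φ)), where G(φ) = −φ²·dρ/dφ > 0. In particular, if G is increasing in φ (which holds whenever ρ is concavely decreasing, i.e., d²ρ/dφ² < 0 and dρ/dφ < 0), then ε^λ is strictly decreasing in φ. -/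
/-! Since `Λ(φ) = μ − 1/φ` has `∂Λ/∂φ = 1/φ²` and `ρ' < 0`, the quotient
`|ρ'(φ)| / (∂Λ/∂φ)` is `G(φ) = −φ² ρ'(φ) > 0`, so `ε^λ = 1/(1 + m n G)` and `ε^λ` falls
wherever `G` rises. When also `ρ'' < 0`, `G' = −2φ ρ' − φ² ρ''` is a sum of two positive
terms. -/

open Set

lemma abs_div_one_div_sq_of_nonpos {d : ℝ} (hd : d ≤ 0) (φ : ℝ) :
    |d| / (1 / φ ^ 2) = -(φ ^ 2) * d := by
  rw [abs_of_nonpos hd, div_div_eq_mul_div, div_one]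
  ring

lemma neg_sq_mul_pos {φ d : ℝ} (hφ : φ ≠ 0) (hd : d < 0) : 0 < -(φ ^ 2) * d := by
  have : 0 < φ ^ 2 := by positivity
  nlinarith

lemma StrictMonoOn.strictAntiOn_inv_one_add_mul {α : Type*} [Preorder α] {g : α → ℝ}
    {s : Set α} {c : ℝ} (hg : StrictMonoOn g s) (hc : 0 < c) (hg₀ : ∀ x ∈ s, 0 ≤ g x) :
    StrictAntiOn (fun x => (1 + c * g x)⁻¹) s := by
  intro a ha b hb hab
  have hpos : 0 < 1 + c * g a := by have := hg₀ a ha; positivity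
  have hlt : c * g a < c * g b := mul_lt_mul_of_pos_left (hg ha hb hab) hc
  exact inv_strictAnti₀ hpos (by linarith)

lemma strictMonoOn_neg_sq_mul {f f' : ℝ → ℝ}
    (hf : ∀ x > (0 : ℝ), HasDerivAt f (f' x) x)
    (hf_neg : ∀ x > (0 : ℝ), f x < 0) (hf'_neg : ∀ x > (0 : ℝ), f' x < 0) :
    StrictMonoOn (fun x => -(x ^ 2) * f x) (Ioi 0) := by
  have hderiv : ∀ x > (0 : ℝ),
      HasDerivAt (fun x => -(x ^ 2) * f x) (-(2 * x) * f x + -(x ^ 2) * f' x) x := by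
    intro x hx
    exact ((hasDerivAt_pow 2 x).neg.mul (hf x hx)).congr_deriv (by simp only [Pi.neg_apply]; ring)
  refine strictMonoOn_of_hasDerivWithinAt_pos (convex_Ioi 0)
    (f' := fun x => -(2 * x) * f x + -(x ^ 2) * f' x)
    (fun x hx => (hderiv x hx).continuousAt.continuousWithinAt) (fun x hx => ?_) fun x hx => ?_
  · rw [interior_Ioi] at hx ⊢
    exact (hderiv x hx).hasDerivWithinAt
  · rw [interior_Ioi, mem_Ioi] at hx
    have : 0 < -(2 * x) * f x := by nlinarith [hf_neg x hx]
    have : 0 < -(x ^ 2) * f' x := neg_sq_mul_pos hx.ne' (hf'_neg x hx)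
    linarith

theorem mm1_elasticity_general
    (ρ' ρ'' : ℝ → ℝ) (m n : ℝ)
    (hm : 0 < m) (hn : 0 < n)
    (h2 : ∀ φ > (0:ℝ), HasDerivAt ρ' (ρ'' φ) φ)
    (hneg : ∀ φ > (0:ℝ), ρ' φ < 0) :
    (∀ φ > (0:ℝ),
      (1 + m * n * |ρ' φ| / (1 / φ ^ 2))⁻¹ = 1 / (1 + m * n * (-(φ ^ 2) * ρ' φ)) ∧
      0 < -(φ ^ 2) * ρ' φ) ∧
    (StrictMonoOn (fun φ => -(φ ^ 2) * ρ' φ) (Set.Ioi 0) →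
      StrictAntiOn (fun φ => (1 + m * n * |ρ' φ| / (1 / φ ^ 2))⁻¹) (Set.Ioi 0)) ∧
    ((∀ φ > (0:ℝ), ρ'' φ < 0) →
      StrictMonoOn (fun φ => -(φ ^ 2) * ρ' φ) (Set.Ioi 0)) := by
  have hG_pos : ∀ φ > (0:ℝ), 0 < -(φ ^ 2) * ρ' φ :=
    fun φ hφ => neg_sq_mul_pos hφ.ne' (hneg φ hφ)
  have hε : ∀ φ > (0:ℝ), m * n * |ρ' φ| / (1 / φ ^ 2) = m * n * (-(φ ^ 2) * ρ' φ) :=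
    fun φ hφ => by rw [mul_div_assoc, abs_div_one_div_sq_of_nonpos (hneg φ hφ).le]
  refine ⟨fun φ hφ => ⟨by rw [hε φ hφ, one_div], hG_pos φ hφ⟩, fun hG_mono => ?_,
    fun hρ'' => strictMonoOn_neg_sq_mul h2 hneg hρ''⟩
  refine (hG_mono.strictAntiOn_inv_one_add_mul (mul_pos hm hn)
    fun φ hφ => (hG_pos φ hφ).le).congr fun φ hφ => ?_
  simp only [hε φ hφ]

/-- For the M/M/1 congestion function (`Λ(φ,μ)=μ−1/φ`, so `∂Λ/∂φ = 1/φ²`),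
the elasticity of throughput is `ε^λ(φ) = 1/(1+m·n·G(φ))` with
`G(φ) = −φ²·ρ'(φ) > 0`; moreover if `G` is increasing then `ε^λ` is strictly
decreasing, and `G` is increasing whenever `ρ'' < 0` and `ρ' < 0` on `(0,∞)`. -/
theorem mm1_elasticity
    (ρ ρ' ρ'' : ℝ → ℝ) (m n : ℝ)
    (hm : 0 < m) (hn : 0 < n)
    (h1 : ∀ φ > (0:ℝ), HasDerivAt ρ (ρ' φ) φ)
    (h2 : ∀ φ > (0:ℝ), HasDerivAt ρ' (ρ'' φ) φ)
    (hneg : ∀ φ > (0:ℝ), ρ' φ < 0) :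
    (∀ φ > (0:ℝ),
      (1 + m * n * |ρ' φ| / (1 / φ ^ 2))⁻¹ = 1 / (1 + m * n * (-(φ ^ 2) * ρ' φ)) ∧
      0 < -(φ ^ 2) * ρ' φ) ∧
    (StrictMonoOn (fun φ => -(φ ^ 2) * ρ' φ) (Set.Ioi 0) →
      StrictAntiOn (fun φ => (1 + m * n * |ρ' φ| / (1 / φ ^ 2))⁻¹) (Set.Ioi 0)) ∧
    ((∀ φ > (0:ℝ), ρ'' φ < 0) →
      StrictMonoOn (fun φ => -(φ ^ 2) * ρ' φ) (Set.Ioi 0)) :=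
  mm1_elasticity_general ρ' ρ'' m n hm hn h2 hneg
end
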